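/- arXiv:2303.10211 — 2 statements merged into one kernel-verified Lean document; each statement's English description precedes it below -/
import Mathlib

section
/- Let B : ℝ → ℝ be even (B(x) = B(-x)) with compact support, and define f_φ and D^j as above. For any k ∈ {1,…,n}, x ∈ [0,1]ⁿ, φ ∈ [-1,1]^{ℤⁿ}, there exist x̃ ∈ [0,1]ⁿ and φ̃ ∈ [-1,1]^{ℤⁿ} such that ∂f_{φ̃}/∂x_k(x̃) = -∂f_φ/∂x_k(x) and ∂f_{φ̃}/∂x_j(x̃) = ∂f_φ/∂x_j(x) for all j ≠ k. -/
open Finset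

/-- Lemma 2 of Appendix D: with `B` even and compactly supported, for any
coordinate `k`, point `x ∈ [0,1]ⁿ` and control points `φ ∈ [-1,1]^{ℤⁿ}`, there
are `x̃ ∈ [0,1]ⁿ` and `φ̃ ∈ [-1,1]^{ℤⁿ}` such that the `k`-th partial derivative
of `f` flips sign while all other partial derivatives are unchanged. -/
theorem stmt10 (n : ℕ) (B : ℝ → ℝ) (hBeven : ∀ x, B x = B (-x))
    (hBsupp : HasCompactSupport B)
    (P : ((Fin n → ℤ) → ℝ) → (Fin n → ℝ) → Fin n → ℝ)
    (hP : ∀ ψ x j, P ψ x j = ∑' α : Fin n → ℤ,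
      ψ α * (deriv B (x j - α j) * ∏ i ∈ univ.erase j, B (x i - α i)))
    (k : Fin n) (x : Fin n → ℝ) (hx : ∀ i, x i ∈ Set.Icc (0:ℝ) 1)
    (φ : (Fin n → ℤ) → ℝ) (hφ : ∀ α, |φ α| ≤ 1) :
    ∃ x' : Fin n → ℝ, (∀ i, x' i ∈ Set.Icc (0:ℝ) 1) ∧
      ∃ ψ : (Fin n → ℤ) → ℝ, (∀ α, |ψ α| ≤ 1) ∧
        P ψ x' k = -P φ x k ∧ ∀ j, j ≠ k → P ψ x' j = P φ x j := by
  classical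
  set x' : Fin n → ℝ := fun i => if i = k then x i else 1 - x i with hx'
  set g : (Fin n → ℤ) → (Fin n → ℤ) := fun α i => if i = k then α i else 1 - α i with hgdef
  have hginv : Function.Involutive g := by
    intro α; funext i; by_cases h : i = k <;> simp [g, h]
  set ψ : (Fin n → ℤ) → ℝ := fun α => -φ (g α) with hψ
  have hB' : ∀ y : ℝ, deriv B (-y) = -deriv B y := by
    intro y
    have hBe : B = fun z => B (-z) := funext fun z => hBeven z
    have h2 := deriv_comp_neg (f := B) (x := y)
    rw [← hBe] at h2
    linarith
  have keyB : ∀ (i : Fin n) (α : Fin n → ℤ), B (x' i - α i) = B (x i - g α i) := by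
    intro i α
    by_cases h : i = k
    · simp [x', g, h]
    · rw [hBeven (x' i - α i)]
      congr 1
      simp only [x', g, if_neg h]
      push_cast
      ring
  have keyD : ∀ (i : Fin n) (α : Fin n → ℤ), i ≠ k →
      deriv B (x' i - α i) = -deriv B (x i - g α i) := by
    intro i α h
    have he : x' i - (α i : ℝ) = -(x i - (g α i : ℝ)) := by
      simp only [x', g, if_neg h]; push_cast; ring
    rw [he, hB']
  have keyDk : ∀ (α : Fin n → ℤ), deriv B (x' k - α k) = deriv B (x k - g α k) := by
    intro α; simp [x', g]
  have keyP : ∀ (i : Fin n) (α : Fin n → ℤ),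
      (∏ i' ∈ univ.erase i, B (x' i' - α i')) = ∏ i' ∈ univ.erase i, B (x i' - g α i') :=
    fun i α => Finset.prod_congr rfl fun i' _ => keyB i' α
  refine ⟨x', fun i => ?_, ψ, fun α => ?_, ?_, ?_⟩
  · by_cases h : i = k
    · simpa [x', h] using hx k
    · have hxi := hx i
      simp only [Set.mem_Icc] at hxi ⊢
      simp only [x', if_neg h]
      constructor <;> linarith [hxi.1, hxi.2]
  · simpa [ψ, abs_neg] using hφ (g α)
  · rw [hP, hP]
    calc (∑' α : Fin n → ℤ, ψ α * (deriv B (x' k - α k) * ∏ i ∈ univ.erase k, B (x' i - α i)))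
        = ∑' α : Fin n → ℤ,
            -(φ (g α) * (deriv B (x k - g α k) * ∏ i ∈ univ.erase k, B (x i - g α i))) := by
          refine tsum_congr fun α => ?_
          rw [keyDk, keyP]; simp only [ψ]; ring
      _ = -∑' α : Fin n → ℤ,
            φ (g α) * (deriv B (x k - g α k) * ∏ i ∈ univ.erase k, B (x i - g α i)) := tsum_neg
      _ = -∑' α : Fin n → ℤ,
            φ α * (deriv B (x k - α k) * ∏ i ∈ univ.erase k, B (x i - α i)) := by
          exact congrArg Neg.neg (Equiv.tsum_eq hginv.toPerm
            (fun α => φ α * (deriv B (x k - α k) * ∏ i ∈ univ.erase k, B (x i - α i))))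
  · intro j hj
    rw [hP, hP]
    calc (∑' α : Fin n → ℤ, ψ α * (deriv B (x' j - α j) * ∏ i ∈ univ.erase j, B (x' i - α i)))
        = ∑' α : Fin n → ℤ,
            φ (g α) * (deriv B (x j - g α j) * ∏ i ∈ univ.erase j, B (x i - g α i)) := by
          refine tsum_congr fun α => ?_
          rw [keyD j α hj, keyP]; simp only [ψ]; ring
      _ = ∑' α : Fin n → ℤ,
            φ α * (deriv B (x j - α j) * ∏ i ∈ univ.erase j, B (x i - α i)) :=
          Equiv.tsum_eq hginv.toPerm
            (fun α => φ α * (deriv B (x j - α j) * ∏ i ∈ univ.erase j, B (x i - α i)))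
end

section
/- With the same setting, define g_φ : ℝⁿ → ℝⁿ by stacking n copies of f_φ, i.e., g_φ(x) = (f_φ(x),…,f_φ(x)). Then there exist φ ∈ [-1/Kₙ, 1/Kₙ]^{ℤⁿ} and x ∈ [0,1]ⁿ such that det(∂g_φ/∂x + I)(x) = 0; i.e., the bound 1/Kₙ on control point magnitudes is tight for invertibility of the deformation x ↦ x + g_φ(x). -/
open Finset

/-- Theorem 6 of Appendix D: the bound `1 / Kₙ` is tight. There exist control
points `φ` with `|φ(α)| ≤ 1 / Kₙ` and a point `x ∈ [0,1]ⁿ` at which the Jacobian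
of `x ↦ x + g_φ(x)` (with `g_φ` stacking `n` copies of `f_φ`) is singular:
`det(∂g_φ/∂x + I)(x) = 0`. -/
theorem stmt12 (n : ℕ) (B : ℝ → ℝ) (hBcont : Continuous B)
    (hBeven : ∀ x, B x = B (-x)) (hBsupp : HasCompactSupport B)
    (hBdiff : ∀ᵐ x : ℝ, DifferentiableAt ℝ B x)
    (P : ((Fin n → ℤ) → ℝ) → (Fin n → ℝ) → Fin n → ℝ)
    (hP : ∀ ψ x j, P ψ x j = ∑' α : Fin n → ℤ,
      ψ α * (deriv B (x j - α j) * ∏ i ∈ univ.erase j, B (x i - α i)))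
    (Kn : ℝ)
    (hKn : IsGreatest {S : ℝ | ∃ x : Fin n → ℝ, (∀ i, x i ∈ Set.Icc (0:ℝ) 1) ∧
      S = ∑' α : Fin n → ℤ,
        |∑ j, deriv B (x j - α j) * ∏ i ∈ univ.erase j, B (x i - α i)|} Kn)
    (hKpos : 0 < Kn) :
    ∃ φ : (Fin n → ℤ) → ℝ, (∀ α, |φ α| ≤ 1 / Kn) ∧
      ∃ x : Fin n → ℝ, (∀ i, x i ∈ Set.Icc (0:ℝ) 1) ∧
        Matrix.det ((Matrix.of fun _ j : Fin n => P φ x j) + 1) = 0 := by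
  obtain ⟨x, hx, hKx⟩ := hKn.1
  -- `n ≠ 0`
  rcases Nat.eq_zero_or_pos n with hn | hn
  · subst hn
    simp only [Finset.univ_eq_empty, Finset.sum_empty, abs_zero, tsum_zero] at hKx
    exact absurd hKx (by linarith)
  -- abbreviations
  set t : (Fin n → ℤ) → Fin n → ℝ := fun α j =>
    deriv B (x j - α j) * ∏ i ∈ univ.erase j, B (x i - α i) with ht
  set s : (Fin n → ℤ) → ℝ := fun α => ∑ j, t α j with hs
  -- the control points
  set φ : (Fin n → ℤ) → ℝ := fun α => -Real.sign (s α) / Kn with hφ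
  have hsign : ∀ y : ℝ, Real.sign y * y = |y| := by
    intro y
    rcases lt_trichotomy y 0 with h | h | h
    · rw [Real.sign_of_neg h, abs_of_neg h]; ring
    · simp [h]
    · rw [Real.sign_of_pos h, abs_of_pos h]; ring
  have hφbound : ∀ α, |φ α| ≤ 1 / Kn := by
    intro α
    rw [hφ]
    simp only [abs_div, abs_neg, abs_of_pos hKpos]
    have hsign1 : |Real.sign (s α)| ≤ 1 := by
      rcases lt_trichotomy (s α) 0 with h | h | h
      · rw [Real.sign_of_neg h]; norm_num
      · simp [h]
      · rw [Real.sign_of_pos h]; norm_num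
    gcongr
  refine ⟨φ, hφbound, x, hx, ?_⟩
  -- summability of `|s|`
  have habs_summable : Summable fun α => |s α| := by
    by_contra hcon
    rw [tsum_eq_zero_of_not_summable hcon] at hKx
    linarith
  -- `t · j` has finite support
  have htfin : ∀ j, (Function.support fun α => t α j).Finite := by
    intro j
    have hB' : HasCompactSupport (deriv B) := hBsupp.deriv
    obtain ⟨R₁, hR₁⟩ := hBsupp.isCompact.isBounded.subset_closedBall 0
    obtain ⟨R₂, hR₂⟩ := hB'.isCompact.isBounded.subset_closedBall 0
    set R : ℝ := max R₁ R₂ with hR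
    set m : ℤ := ⌈R + 1⌉ with hm
    have key : (Function.support fun α => t α j) ⊆
        Set.pi Set.univ (fun _ : Fin n => Set.Icc (-m) m) := by
      intro α hα
      have hαj : ∀ i, |x i - (α i : ℝ)| ≤ R := by
        intro i
        by_contra hcon
        push_neg at hcon
        apply hα
        rcases eq_or_ne i j with rfl | hij
        · have : deriv B (x i - α i) = 0 := by
            apply image_eq_zero_of_notMem_tsupport
            intro hmem
            have := hR₂ hmem
            simp only [Metric.mem_closedBall, dist_zero_right, Real.norm_eq_abs] at this
            exact absurd (this.trans (le_max_right _ _)) (not_le.mpr hcon)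
          simp only [ht, this, zero_mul]
        · have : B (x i - α i) = 0 := by
            apply image_eq_zero_of_notMem_tsupport
            intro hmem
            have := hR₁ hmem
            simp only [Metric.mem_closedBall, dist_zero_right, Real.norm_eq_abs] at this
            exact absurd (this.trans (le_max_left _ _)) (not_le.mpr hcon)
          have hmem : i ∈ univ.erase j := Finset.mem_erase.mpr ⟨hij, Finset.mem_univ i⟩
          exact mul_eq_zero_of_right _ (Finset.prod_eq_zero hmem this)
      intro i _
      have h1 := hαj i
      have hxi := hx i
      have h2 : |(α i : ℝ)| ≤ R + 1 := by
        have := abs_sub_abs_le_abs_sub (α i : ℝ) (x i)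
        rw [abs_sub_comm] at h1
        have : |(α i : ℝ)| ≤ |x i| + R := by
          calc |(α i : ℝ)| = |x i - (x i - α i)| := by ring_nf
            _ ≤ |x i| + |x i - α i| := abs_sub _ _
            _ ≤ |x i| + R := by linarith [hαj i]
        have hx1 : |x i| ≤ 1 := abs_le.mpr ⟨by linarith [hxi.1], hxi.2⟩
        linarith
      have hcast : (|α i| : ℝ) ≤ (m : ℝ) := by
        push_cast
        calc |(α i : ℝ)| ≤ R + 1 := h2
          _ ≤ m := Int.le_ceil _
      have : |α i| ≤ m := by exact_mod_cast hcast
      exact Set.mem_Icc.mpr (abs_le.mp this)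
    exact Set.Finite.subset (Set.Finite.pi fun _ => Set.finite_Icc _ _) key
  -- summability of each `φ α * t α j`
  have htsummable : ∀ j, Summable fun α => φ α * t α j := by
    intro j
    apply summable_of_finite_support
    apply Set.Finite.subset (htfin j)
    intro α hα
    simp only [Function.mem_support] at hα ⊢
    exact fun h => hα (by rw [h, mul_zero])
  -- sum of row entries is -1
  have hrow : ∑ j, P φ x j = -1 := by
    have h1 : ∑ j, P φ x j = ∑ j : Fin n, ∑' α : Fin n → ℤ, φ α * t α j := by
      apply Finset.sum_congr rfl
      intro j _
      rw [hP]
    rw [h1, ← Summable.tsum_finsetSum fun j _ => htsummable j]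
    have h2 : ∀ α : Fin n → ℤ, ∑ j, φ α * t α j = -(1 / Kn) * |s α| := by
      intro α
      rw [← Finset.mul_sum]
      have hsα : ∑ i : Fin n, t α i = s α := rfl
      rw [hsα, hφ, ← hsign (s α)]
      ring
    rw [tsum_congr h2, tsum_mul_left, ← hKx]
    field_simp
  -- singularity of the matrix
  rw [← Matrix.exists_mulVec_eq_zero_iff]
  refine ⟨1, ?_, ?_⟩
  · intro h
    have : (1 : Fin n → ℝ) ⟨0, hn⟩ = 0 := by rw [h]; rfl
    simp at this
  · funext i
    simp only [Matrix.mulVec, dotProduct, Matrix.add_apply, Matrix.of_apply,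
      Pi.one_apply, mul_one, Matrix.one_apply, Finset.sum_add_distrib, hrow,
      Finset.sum_ite_eq, Finset.mem_univ, if_true, Pi.zero_apply]
    ring
end
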